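/- arXiv:2004.07353 — 5 statements merged into one kernel-verified Lean document; each statement's English description precedes it below -/
import Mathlib

section
/- The nucleus assignments N_L and N_R are well-defined functors (for every W-coalgebra (y, β) the pair (R y, R ε_y) is a T-algebra, and for every T-algebra (x, α) the pair (L x, L η_x) is a W-coalgebra), and N_L is left adjoint to N_R: there is a bijection Hom_{Alg(T)}(N_L(y,β), (x,α)) ≅ Hom_{Coalg(W)}((y,β), N_R(x,α)), natural in (y,β) and (x,α), which sends an algebra homomorphism f : R y ⟶ x to the coalgebra homomorphism β ≫ L f : y ⟶ L x. -/
open CategoryTheory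

variable {A : Type*} {B : Type*} [Category A] [Category B]

/-- The nucleus functor `N_L : Coalg(W) ⥤ Alg(T)`, sending a coalgebra `(y, β)` to the
algebra `(R y, R ε_y)` and a coalgebra morphism `f` to `R f`. -/
def nucleusNL (L : A ⥤ B) (R : B ⥤ A) (adj : L ⊣ R) :
    adj.toComonad.Coalgebra ⥤ adj.toMonad.Algebra where
  obj y :=
    { A := R.obj y.A
      a := R.map (adj.counit.app y.A)
      unit := by simp [Adjunction.toMonad]
      assoc := by
        dsimp [Adjunction.toMonad]
        rw [← R.map_comp, ← R.map_comp, adj.counit_naturality] }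
  map f :=
    { f := R.map f.f
      h := by
        dsimp [Adjunction.toMonad]
        rw [← R.map_comp, ← R.map_comp, adj.counit_naturality] }
  map_id := by intros; ext; simp
  map_comp := by intros; ext; simp

/-- The nucleus functor `N_R : Alg(T) ⥤ Coalg(W)`, sending an algebra `(x, α)` to the
coalgebra `(L x, L η_x)` and an algebra morphism `f` to `L f`. -/
def nucleusNR (L : A ⥤ B) (R : B ⥤ A) (adj : L ⊣ R) :
    adj.toMonad.Algebra ⥤ adj.toComonad.Coalgebra where
  obj x :=
    { A := L.obj x.A
      a := L.map (adj.unit.app x.A)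
      counit := by simp [Adjunction.toComonad]
      coassoc := by
        dsimp [Adjunction.toComonad]
        rw [← L.map_comp, ← L.map_comp, adj.unit_naturality] }
  map f :=
    { f := L.map f.f
      h := by
        dsimp [Adjunction.toComonad]
        rw [← L.map_comp, ← L.map_comp, adj.unit_naturality] }
  map_id := by intros; ext; simp
  map_comp := by intros; ext; simp

/-!
After forgetting the (co)algebra structure, `N_L` and `N_R` are the comparison functors
`K : B ⥤ Alg(T)`, `y ↦ (R y, R ε_y)`, and `K' : A ⥤ Coalg(W)`, `x ↦ (L x, L η_x)`, so they are well
defined. Coassociativity says exactly that `β : (y, β) ⟶ K' (R y)` is a coalgebra morphism, and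
associativity that `α : K (L x) ⟶ (x, α)` is an algebra morphism. Hence `f ↦ β ≫ L f` and
`g ↦ R g ≫ α` send arbitrary morphisms of `A` and `B` to (co)algebra morphisms; on (co)algebra
morphisms they are mutually inverse by the (co)unit laws.
-/

namespace CategoryTheory.Adjunction

variable {L : A ⥤ B} {R : B ⥤ A} (adj : L ⊣ R)

theorem map_comp_map_comp_eq_of_counit {y : B} {x : A} (β : y ⟶ L.obj (R.obj y))
    (hβ : β ≫ adj.counit.app y = 𝟙 y) (α : R.obj (L.obj x) ⟶ x) (f : R.obj y ⟶ x)
    (hf : R.map (L.map f) ≫ α = R.map (adj.counit.app y) ≫ f) :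
    R.map (β ≫ L.map f) ≫ α = f := by
  rw [R.map_comp, Category.assoc, hf, ← R.map_comp_assoc, hβ, R.map_id, Category.id_comp]

theorem comp_map_comp_eq_of_unit {y : B} {x : A} (α : R.obj (L.obj x) ⟶ x)
    (hα : adj.unit.app x ≫ α = 𝟙 x) (β : y ⟶ L.obj (R.obj y)) (g : y ⟶ L.obj x)
    (hg : β ≫ L.map (R.map g) = g ≫ L.map (adj.unit.app x)) :
    β ≫ L.map (R.map g ≫ α) = g := by
  rw [L.map_comp, reassoc_of% hg, ← L.map_comp, hα, L.map_id, Category.comp_id]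

def coalgebraStructureHom (y : adj.toComonad.Coalgebra) :
    y ⟶ (Comonad.comparison adj).obj (R.obj y.A) where
  f := y.a
  h := y.coassoc.symm

def algebraStructureHom (x : adj.toMonad.Algebra) :
    (Monad.comparison adj).obj (L.obj x.A) ⟶ x where
  f := x.a
  h := x.assoc.symm

def nucleusHomEquiv (y : adj.toComonad.Coalgebra) (x : adj.toMonad.Algebra) :
    ((nucleusNL L R adj).obj y ⟶ x) ≃ (y ⟶ (nucleusNR L R adj).obj x) where
  toFun f := adj.coalgebraStructureHom y ≫ (Comonad.comparison adj).map f.f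
  invFun g := (Monad.comparison adj).map g.f ≫ adj.algebraStructureHom x
  left_inv f := Monad.Algebra.Hom.ext <|
    adj.map_comp_map_comp_eq_of_counit y.a y.counit x.a f.f f.h
  right_inv g := Comonad.Coalgebra.Hom.ext <|
    adj.comp_map_comp_eq_of_unit x.a x.unit y.a g.f g.h

def nucleusAdjunction : nucleusNL L R adj ⊣ nucleusNR L R adj :=
  mkOfHomEquiv
    { homEquiv := adj.nucleusHomEquiv
      homEquiv_naturality_left_symm := fun f g =>
        Monad.Algebra.Hom.ext (R.map_comp_assoc f.f g.f _)
      homEquiv_naturality_right := fun f g =>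
        Comonad.Coalgebra.Hom.ext
          ((_ ≫= L.map_comp f.f g.f).trans (Category.assoc _ _ _).symm) }

theorem nucleusAdjunction_homEquiv_apply_f (y : adj.toComonad.Coalgebra)
    (x : adj.toMonad.Algebra) (f : (nucleusNL L R adj).obj y ⟶ x) :
    (adj.nucleusAdjunction.homEquiv y x f).f = y.a ≫ L.map f.f := by
  rw [nucleusAdjunction, mkOfHomEquiv_homEquiv]
  rfl

end CategoryTheory.Adjunction

/-- the nucleus assignments are well-defined functors (for every `W`-coalgebra
`(y, β)` the pair `(R y, R ε_y)` satisfies the `T`-algebra laws, and for every `T`-algebra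
`(x, α)` the pair `(L x, L η_x)` satisfies the `W`-coalgebra laws), and `N_L` is left adjoint
to `N_R`, the adjunction bijection sending an algebra homomorphism `f : R y ⟶ x` to the
coalgebra homomorphism `β ≫ L f : y ⟶ L x`, naturally in `(y, β)` and `(x, α)`. -/
theorem nucleus_functors_welldefined_and_adjoint
    (L : A ⥤ B) (R : B ⥤ A) (adj : L ⊣ R) :
    -- well-definedness of `N_L` on objects: `(R y, R ε_y)` is a `T`-algebra
    (∀ y : adj.toComonad.Coalgebra,
      (adj.unit.app (R.obj y.A) ≫ R.map (adj.counit.app y.A) = 𝟙 (R.obj y.A)) ∧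
      (R.map (adj.counit.app (L.obj (R.obj y.A))) ≫ R.map (adj.counit.app y.A)
        = R.map (L.map (R.map (adj.counit.app y.A))) ≫ R.map (adj.counit.app y.A))) ∧
    -- well-definedness of `N_R` on objects: `(L x, L η_x)` is a `W`-coalgebra
    (∀ x : adj.toMonad.Algebra,
      (L.map (adj.unit.app x.A) ≫ adj.counit.app (L.obj x.A) = 𝟙 (L.obj x.A)) ∧
      (L.map (adj.unit.app x.A) ≫ L.map (adj.unit.app (R.obj (L.obj x.A)))
        = L.map (adj.unit.app x.A) ≫ L.map (R.map (L.map (adj.unit.app x.A))))) ∧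
    -- `N_L ⊣ N_R`, with the (natural) bijection sending `f : N_L (y,β) ⟶ (x,α)` to `β ≫ L f`
    (∃ adjN : nucleusNL L R adj ⊣ nucleusNR L R adj,
      ∀ (y : adj.toComonad.Coalgebra) (x : adj.toMonad.Algebra)
        (f : (nucleusNL L R adj).obj y ⟶ x),
        ((adjN.homEquiv y x) f).f = y.a ≫ L.map f.f) := by
  refine ⟨fun y => ⟨((nucleusNL L R adj).obj y).unit, ((nucleusNL L R adj).obj y).assoc⟩,
    fun x => ⟨((nucleusNR L R adj).obj x).counit, ((nucleusNR L R adj).obj x).coassoc⟩,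
    adj.nucleusAdjunction, adj.nucleusAdjunction_homEquiv_apply_f⟩
end

section
/- Let α : R(L x) ⟶ x and β : y ⟶ L(R y) be arbitrary morphisms (no algebra or coalgebra laws assumed). The maps f ↦ f̄ := β ≫ L f (from Hom_A(R y, x) to Hom_B(y, L x)) and g ↦ g̲ := R g ≫ α (from Hom_B(y, L x) to Hom_A(R y, x)) restrict to mutually inverse bijections between the sets { f : R y ⟶ x | f = R β ≫ R(L f) ≫ α } and { g : y ⟶ L x | g = β ≫ L(R g) ≫ L α }. -/
open CategoryTheory

/-- for arbitrary morphisms `α : R(L x) ⟶ x` and `β : y ⟶ L(R y)` (no algebra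
or coalgebra laws assumed), the maps `f ↦ f̄ := β ≫ L f` and `g ↦ g̲ := R g ≫ α` restrict to
mutually inverse bijections between `{ f : R y ⟶ x | f = R β ≫ R(L f) ≫ α }` and
`{ g : y ⟶ L x | g = β ≫ L(R g) ≫ L α }`. -/
theorem nucleus_fixedpoint_bijection
    {A : Type*} {B : Type*} [Category A] [Category B]
    (L : A ⥤ B) (R : B ⥤ A) (adj : L ⊣ R)
    (x : A) (y : B) (α : R.obj (L.obj x) ⟶ x) (β : y ⟶ L.obj (R.obj y)) :
    -- `f ↦ β ≫ L f` maps the first set into the second set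
    (∀ f : R.obj y ⟶ x, f = R.map β ≫ R.map (L.map f) ≫ α →
      β ≫ L.map f = β ≫ L.map (R.map (β ≫ L.map f)) ≫ L.map α) ∧
    -- `g ↦ R g ≫ α` maps the second set into the first set
    (∀ g : y ⟶ L.obj x, g = β ≫ L.map (R.map g) ≫ L.map α →
      R.map g ≫ α = R.map β ≫ R.map (L.map (R.map g ≫ α)) ≫ α) ∧
    -- the two maps are mutually inverse on these sets
    (∀ f : R.obj y ⟶ x, f = R.map β ≫ R.map (L.map f) ≫ α →
      R.map (β ≫ L.map f) ≫ α = f) ∧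
    (∀ g : y ⟶ L.obj x, g = β ≫ L.map (R.map g) ≫ L.map α →
      β ≫ L.map (R.map g ≫ α) = g) := by
  refine ⟨?_, ?_, ?_, ?_⟩ <;> intro f hf
  · conv_lhs => rw [hf]
    simp [Functor.map_comp]
  · conv_lhs => rw [hf]
    simp [Functor.map_comp]
  · conv_rhs => rw [hf]
    simp [Functor.map_comp]
  · conv_rhs => rw [hf]
    simp [Functor.map_comp]
end

section
/- If A and B are idempotent complete, then the Eilenberg–Moore category of coalgebras for the comonad K_T = forget_T ⋙ free_T on Alg(T) is equivalent to Coalg(W), and the Eilenberg–Moore category of algebras for the monad M_W = forget_W ⋙ cofree_W on Coalg(W) is equivalent to Alg(T). (In other words, applying the Eilenberg–Moore coalgebra construction after the Eilenberg–Moore algebra construction, or in the opposite order, to any adjunction yields the same pair of categories: the nucleus of the adjunction.) -/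
/-!
Both equivalences are liftings of comparison functors. Sending a `W`-coalgebra `(y, β)` to the
`K_T`-coalgebra `((R y, R ε_y), R β)` is fully faithful, because a morphism `h` of `W`-coalgebras
is recovered from `R h` as `β ≫ L (R h) ≫ ε`. It is essentially surjective once `B` is idempotent
complete: for a `K_T`-coalgebra `((a, α), σ)` the transpose `L σ ≫ ε_{L a}` of `σ` is an idempotent,
and on a splitting `(y, i, r)` of it, `i ≫ L (σ ≫ R r)` is a `W`-coalgebra structure whose image is
isomorphic to `((a, α), σ)` through `σ ≫ R r : a ≅ R y`. The second equivalence is the dual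
construction, splitting the transpose `η_{R b} ≫ R τ` of an `M_W`-algebra structure `τ`.
-/

open CategoryTheory Category

lemma CategoryTheory.Functor.map_comp_eq_map_comp {C D : Type*} [Category C] [Category D]
    (F : C ⥤ D) {X Y Y' Z : C} {f : X ⟶ Y} {g : Y ⟶ Z} {f' : X ⟶ Y'} {g' : Y' ⟶ Z}
    (h : f ≫ g = f' ≫ g') : F.map f ≫ F.map g = F.map f' ≫ F.map g' := by
  simp only [← F.map_comp, h]

namespace CategoryTheory.Adjunction

variable {A B : Type*} [Category A] [Category B] {L : A ⥤ B} {R : B ⥤ A} (adj : L ⊣ R)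

lemma comp_toComonad_counit_eq_id_iff {Z : adj.toMonad.Algebra}
    (g : Z ⟶ adj.toMonad.adj.toComonad.obj Z) :
    g ≫ adj.toMonad.adj.toComonad.ε.app Z = 𝟙 Z ↔ g.f ≫ Z.a = 𝟙 Z.A := by
  rw [Monad.Algebra.Hom.ext_iff]
  simp only [toComonad_ε, Monad.adj_counit]
  rfl

lemma comp_toComonad_δ_eq_iff {Z : adj.toMonad.Algebra}
    (g : Z ⟶ adj.toMonad.adj.toComonad.obj Z) :
    g ≫ adj.toMonad.adj.toComonad.δ.app Z = g ≫ adj.toMonad.adj.toComonad.map g ↔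
      g.f ≫ R.map (L.map (adj.unit.app Z.A)) = g.f ≫ R.map (L.map g.f) := by
  rw [Monad.Algebra.Hom.ext_iff]
  simp only [toComonad_δ, Monad.adj_unit]
  rfl

lemma toMonad_unit_comp_eq_id_iff {Z : adj.toComonad.Coalgebra}
    (g : adj.toComonad.adj.toMonad.obj Z ⟶ Z) :
    adj.toComonad.adj.toMonad.η.app Z ≫ g = 𝟙 Z ↔ Z.a ≫ g.f = 𝟙 Z.A := by
  rw [Comonad.Coalgebra.Hom.ext_iff]
  simp only [toMonad_η, Comonad.adj_unit]
  rfl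

lemma toMonad_μ_comp_eq_iff {Z : adj.toComonad.Coalgebra}
    (g : adj.toComonad.adj.toMonad.obj Z ⟶ Z) :
    adj.toComonad.adj.toMonad.μ.app Z ≫ g = adj.toComonad.adj.toMonad.map g ≫ g ↔
      L.map (R.map (adj.counit.app Z.A)) ≫ g.f = L.map (R.map g.f) ≫ g.f := by
  rw [Comonad.Coalgebra.Hom.ext_iff]
  simp only [toMonad_μ, Comonad.adj_counit]
  rfl

/-! ### Coalgebras of the comonad induced on `T`-algebras -/

def liftedMonadComparisonObj {y : B} (β : y ⟶ L.obj (R.obj y))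
    (counit : β ≫ adj.counit.app y = 𝟙 y)
    (coassoc : β ≫ L.map (adj.unit.app (R.obj y)) = β ≫ L.map (R.map β)) :
    adj.toMonad.adj.toComonad.Coalgebra where
  A := (Monad.comparison adj).obj y
  a :=
    { f := R.map β
      h := R.map_comp_eq_map_comp (adj.counit_naturality β) }
  counit := (comp_toComonad_counit_eq_id_iff adj _).mpr <|
    (R.map_comp _ _).symm.trans ((R.congr_map counit).trans (R.map_id y))
  coassoc := (comp_toComonad_δ_eq_iff adj _).mpr <| R.map_comp_eq_map_comp coassoc

def liftedMonadComparison :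
    adj.toComonad.Coalgebra ⥤ adj.toMonad.adj.toComonad.Coalgebra where
  obj Y := liftedMonadComparisonObj adj Y.a Y.counit Y.coassoc
  map g :=
    { f := (Monad.comparison adj).map g.f
      h := by
        ext
        exact R.map_comp_eq_map_comp g.h }

section FullyFaithful

variable {y y' : B} {β : y ⟶ L.obj (R.obj y)} {β' : y' ⟶ L.obj (R.obj y')}

lemma comp_map_map_comp_counit (hβ : β ≫ adj.counit.app y = 𝟙 y) (h : y ⟶ y') :
    β ≫ L.map (R.map h) ≫ adj.counit.app y' = h := by
  simp [reassoc_of% hβ]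

variable (hβ' : β' ≫ adj.counit.app y' = 𝟙 y') {g : R.obj y ⟶ R.obj y'}
  (hg : R.map β ≫ R.map (L.map g) = g ≫ R.map β')

include hβ' hg in
lemma map_comp_map_comp_counit : R.map (β ≫ L.map g ≫ adj.counit.app y') = g := by
  rw [R.map_comp, R.map_comp, reassoc_of% hg, ← R.map_comp, hβ', R.map_id, comp_id]

include hβ' hg in
lemma comp_map_map_comp_map_comp_counit
    (hβ : β ≫ L.map (adj.unit.app (R.obj y)) = β ≫ L.map (R.map β)) :
    β ≫ L.map (R.map (β ≫ L.map g ≫ adj.counit.app y')) =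
      (β ≫ L.map g ≫ adj.counit.app y') ≫ β' := by
  have hβ'_nat : adj.counit.app y' ≫ β' = L.map (R.map β') ≫ adj.counit.app _ :=
    (adj.counit_naturality β').symm
  rw [map_comp_map_comp_counit adj hβ' hg, assoc, assoc, hβ'_nat, ← L.map_comp_assoc,
    ← hg, L.map_comp_assoc, counit_naturality, ← reassoc_of% hβ,
    left_triangle_components_assoc]

end FullyFaithful

def liftedMonadComparisonFullyFaithful : (liftedMonadComparison adj).FullyFaithful where
  preimage {Y Y'} g :=
    { f := Y.a ≫ L.map g.f.f ≫ adj.counit.app Y'.A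
      h := comp_map_map_comp_map_comp_counit adj Y'.counit (congrArg Monad.Algebra.Hom.f g.h)
        Y.coassoc }
  map_preimage {_ Y'} g := by
    ext
    exact map_comp_map_comp_counit adj Y'.counit (congrArg Monad.Algebra.Hom.f g.h)
  preimage_map {Y _} h := by
    ext
    exact comp_map_map_comp_counit adj Y.counit h.f

-- `(a, α, σ)` are the components of a `K_T`-coalgebra `((a, α), σ)`, unbundled so that their
-- types are written with `L` and `R` rather than with the induced (co)monads.
section SplittingCoalgebra

variable {a : A} {α : R.obj (L.obj a) ⟶ a} {σ : a ⟶ R.obj (L.obj a)}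
  (hσ : R.map (L.map σ) ≫ R.map (adj.counit.app (L.obj a)) = α ≫ σ) (hσα : σ ≫ α = 𝟙 a)

include hσ in
lemma map_homEquiv_symm : R.map ((adj.homEquiv a (L.obj a)).symm σ) = α ≫ σ := by
  rw [homEquiv_counit, R.map_comp, hσ]

include hσ hσα in
lemma homEquiv_symm_idem :
    (adj.homEquiv a (L.obj a)).symm σ ≫ (adj.homEquiv a (L.obj a)).symm σ =
      (adj.homEquiv a (L.obj a)).symm σ := by
  rw [← homEquiv_naturality_right_symm, map_homEquiv_symm adj hσ, reassoc_of% hσα]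

lemma homEquiv_symm_comp_map_eq
    (hσσ : σ ≫ R.map (L.map (adj.unit.app a)) = σ ≫ R.map (L.map σ)) :
    (adj.homEquiv a (L.obj a)).symm σ ≫ L.map σ =
      (adj.homEquiv a (L.obj a)).symm σ ≫ L.map (adj.unit.app a) := by
  rw [← homEquiv_naturality_right_symm, ← hσσ, homEquiv_naturality_right_symm]

variable {y : B} {s : Retract y (L.obj a)} (hs : s.r ≫ s.i = (adj.homEquiv a (L.obj a)).symm σ)

include hσ hσα hs in
lemma comp_map_r_comp_map_i : σ ≫ R.map s.r ≫ R.map s.i = σ := by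
  rw [← R.map_comp, hs, map_homEquiv_symm adj hσ, reassoc_of% hσα]

@[simps]
def rightIsoOfRetract : a ≅ R.obj y where
  hom := σ ≫ R.map s.r
  inv := R.map s.i ≫ α
  hom_inv_id := by rw [assoc, reassoc_of% (comp_map_r_comp_map_i adj hσ hσα hs), hσα]
  inv_hom_id := by
    rw [assoc, reassoc_of% (map_homEquiv_symm adj hσ).symm, ← R.map_comp, ← R.map_comp, ← hs]
    simp

lemma rightIsoOfRetract_hom_comp_map_i :
    (rightIsoOfRetract adj hσ hσα hs).hom ≫ R.map s.i = σ := by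
  rw [rightIsoOfRetract_hom, assoc, comp_map_r_comp_map_i adj hσ hσα hs]

lemma map_rightIsoOfRetract_hom_comp_counit :
    L.map (rightIsoOfRetract adj hσ hσα hs).hom ≫ adj.counit.app y =
      (adj.homEquiv a (L.obj a)).symm σ ≫ s.r := by
  simp [homEquiv_counit]

lemma map_map_rightIsoOfRetract_hom_comp_map_counit :
    R.map (L.map (rightIsoOfRetract adj hσ hσα hs).hom) ≫ R.map (adj.counit.app y) =
      α ≫ (rightIsoOfRetract adj hσ hσα hs).hom := by
  rw [← R.map_comp, map_rightIsoOfRetract_hom_comp_counit, R.map_comp, map_homEquiv_symm adj hσ,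
    assoc, rightIsoOfRetract_hom]

lemma comp_map_map_rightIsoOfRetract_hom :
    σ ≫ R.map (L.map (rightIsoOfRetract adj hσ hσα hs).hom) =
      (rightIsoOfRetract adj hσ hσα hs).hom ≫
        R.map (s.i ≫ L.map (rightIsoOfRetract adj hσ hσα hs).hom) := by
  rw [R.map_comp, reassoc_of% (rightIsoOfRetract_hom_comp_map_i adj hσ hσα hs)]

variable (hσσ : σ ≫ R.map (L.map (adj.unit.app a)) = σ ≫ R.map (L.map σ))

include hs hσσ in
lemma retract_i_comp_map_eq : s.i ≫ L.map σ = s.i ≫ L.map (adj.unit.app a) := by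
  have hi : s.i = s.i ≫ (adj.homEquiv a (L.obj a)).symm σ := by rw [← hs, s.retract_assoc]
  rw [hi, assoc, assoc, homEquiv_symm_comp_map_eq adj hσσ]

def coalgebraOfRetract : adj.toComonad.Coalgebra where
  A := y
  a := s.i ≫ L.map (rightIsoOfRetract adj hσ hσα hs).hom
  counit := by
    show (s.i ≫ L.map (rightIsoOfRetract adj hσ hσα hs).hom) ≫ adj.counit.app y = 𝟙 y
    rw [assoc, map_rightIsoOfRetract_hom_comp_counit, ← hs]
    simp
  coassoc := by
    show (s.i ≫ L.map (rightIsoOfRetract adj hσ hσα hs).hom) ≫ L.map (adj.unit.app (R.obj y)) =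
      (s.i ≫ L.map (rightIsoOfRetract adj hσ hσα hs).hom) ≫
        L.map (R.map (s.i ≫ L.map (rightIsoOfRetract adj hσ hσα hs).hom))
    have hu : L.map (rightIsoOfRetract adj hσ hσα hs).hom ≫ L.map (R.map s.i) = L.map σ := by
      rw [← L.map_comp, rightIsoOfRetract_hom_comp_map_i]
    rw [assoc, assoc, ← L.map_comp, ← unit_naturality, R.map_comp, L.map_comp, L.map_comp,
      reassoc_of% hu, reassoc_of% (retract_i_comp_map_eq adj hs hσσ)]

end SplittingCoalgebra

instance [IsIdempotentComplete B] : (liftedMonadComparison adj).EssSurj where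
  mem_essImage X := by
    have hσ : R.map (L.map X.a.f) ≫ R.map (adj.counit.app (L.obj X.A.A)) = X.A.a ≫ X.a.f :=
      X.a.h
    have hσα := (comp_toComonad_counit_eq_id_iff adj X.a).mp X.counit
    have hσσ := (comp_toComonad_δ_eq_iff adj X.a).mp X.coassoc
    obtain ⟨y, i, r, hir, hs⟩ :=
      IsIdempotentComplete.idempotents_split _ _ (homEquiv_symm_idem adj hσ hσα)
    let s : Retract y (L.obj X.A.A) := ⟨i, r, hir⟩
    replace hs : s.r ≫ s.i = _ := hs
    refine ⟨coalgebraOfRetract adj hσ hσα hs hσσ, ⟨Iso.symm <|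
      Comonad.Coalgebra.isoMk
        (Monad.Algebra.isoMk (rightIsoOfRetract adj hσ hσα hs)
          (map_map_rightIsoOfRetract_hom_comp_map_counit adj hσ hσα hs)) ?_⟩⟩
    ext
    exact comp_map_map_rightIsoOfRetract_hom adj hσ hσα hs

instance [IsIdempotentComplete B] : (liftedMonadComparison adj).IsEquivalence where
  faithful := (liftedMonadComparisonFullyFaithful adj).faithful
  full := (liftedMonadComparisonFullyFaithful adj).full

/-! ### Algebras of the monad induced on `W`-coalgebras -/

def liftedComonadComparisonObj {x : A} (α : R.obj (L.obj x) ⟶ x)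
    (unit : adj.unit.app x ≫ α = 𝟙 x)
    (assoc : R.map (adj.counit.app (L.obj x)) ≫ α = R.map (L.map α) ≫ α) :
    adj.toComonad.adj.toMonad.Algebra where
  A := (Comonad.comparison adj).obj x
  a :=
    { f := L.map α
      h := L.map_comp_eq_map_comp (adj.unit_naturality α) }
  unit := (toMonad_unit_comp_eq_id_iff adj _).mpr <|
    (L.map_comp _ _).symm.trans ((L.congr_map unit).trans (L.map_id x))
  assoc := (toMonad_μ_comp_eq_iff adj _).mpr <| L.map_comp_eq_map_comp assoc

def liftedComonadComparison :
    adj.toMonad.Algebra ⥤ adj.toComonad.adj.toMonad.Algebra where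
  obj P := liftedComonadComparisonObj adj P.a P.unit P.assoc
  map g :=
    { f := (Comonad.comparison adj).map g.f
      h := by
        ext
        exact L.map_comp_eq_map_comp g.h }

section FullyFaithful

variable {x x' : A} {α : R.obj (L.obj x) ⟶ x} {α' : R.obj (L.obj x') ⟶ x'}

lemma unit_comp_map_map_comp (hα' : adj.unit.app x' ≫ α' = 𝟙 x') (h : x ⟶ x') :
    adj.unit.app x ≫ R.map (L.map h) ≫ α' = h := by
  simp [hα']

variable (hα : adj.unit.app x ≫ α = 𝟙 x) {g : L.obj x ⟶ L.obj x'}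
  (hg : L.map (R.map g) ≫ L.map α' = L.map α ≫ g)

include hα hg in
lemma map_unit_comp_map_comp : L.map (adj.unit.app x ≫ R.map g ≫ α') = g := by
  rw [L.map_comp, L.map_comp, hg, ← L.map_comp_assoc, hα]
  simp

include hα hg in
lemma map_map_unit_comp_map_comp_comp
    (hα' : R.map (adj.counit.app (L.obj x')) ≫ α' = R.map (L.map α') ≫ α') :
    R.map (L.map (adj.unit.app x ≫ R.map g ≫ α')) ≫ α' =
      α ≫ adj.unit.app x ≫ R.map g ≫ α' := by
  have hα_nat : α ≫ adj.unit.app x = adj.unit.app _ ≫ R.map (L.map α) :=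
    (adj.unit_naturality α).symm
  have hg_nat : L.map (R.map g) ≫ adj.counit.app (L.obj x') = adj.counit.app (L.obj x) ≫ g :=
    adj.counit_naturality g
  rw [map_unit_comp_map_comp adj hα hg, reassoc_of% hα_nat, ← R.map_comp_assoc, ← hg,
    R.map_comp_assoc, ← hα', ← R.map_comp_assoc, hg_nat, R.map_comp_assoc,
    right_triangle_components_assoc]

end FullyFaithful

def liftedComonadComparisonFullyFaithful : (liftedComonadComparison adj).FullyFaithful where
  preimage {P P'} g :=
    { f := adj.unit.app P.A ≫ R.map g.f.f ≫ P'.a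
      h := map_map_unit_comp_map_comp_comp adj P.unit (congrArg Comonad.Coalgebra.Hom.f g.h)
        P'.assoc }
  map_preimage {P _} g := by
    ext
    exact map_unit_comp_map_comp adj P.unit (congrArg Comonad.Coalgebra.Hom.f g.h)
  preimage_map {_ P'} h := by
    ext
    exact unit_comp_map_map_comp adj P'.unit h.f

-- `(b, β, τ)` are the components of an `M_W`-algebra `((b, β), τ)`, unbundled in the same way.
section SplittingAlgebra

variable {b : B} {β : b ⟶ L.obj (R.obj b)} {τ : L.obj (R.obj b) ⟶ b}
  (hτ : L.map (adj.unit.app (R.obj b)) ≫ L.map (R.map τ) = τ ≫ β) (hβτ : β ≫ τ = 𝟙 b)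

include hτ in
lemma map_homEquiv : L.map (adj.homEquiv (R.obj b) b τ) = τ ≫ β := by
  rw [homEquiv_unit, L.map_comp, hτ]

include hτ hβτ in
lemma homEquiv_idem :
    adj.homEquiv (R.obj b) b τ ≫ adj.homEquiv (R.obj b) b τ = adj.homEquiv (R.obj b) b τ := by
  rw [← homEquiv_naturality_left, map_homEquiv adj hτ, assoc, hβτ, comp_id]

lemma map_comp_homEquiv_eq
    (hττ : L.map (R.map (adj.counit.app b)) ≫ τ = L.map (R.map τ) ≫ τ) :
    R.map τ ≫ adj.homEquiv (R.obj b) b τ =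
      R.map (adj.counit.app b) ≫ adj.homEquiv (R.obj b) b τ := by
  rw [← homEquiv_naturality_left, ← hττ]
  exact adj.homEquiv_naturality_left _ _

variable {x : A} {t : Retract x (R.obj b)} (ht : t.r ≫ t.i = adj.homEquiv (R.obj b) b τ)

include hτ hβτ ht in
lemma map_r_comp_map_i_comp : L.map t.r ≫ L.map t.i ≫ τ = τ := by
  rw [← L.map_comp_assoc, ht, map_homEquiv adj hτ, assoc, hβτ, comp_id]

@[simps]
def leftIsoOfRetract : L.obj x ≅ b where
  hom := L.map t.i ≫ τ
  inv := β ≫ L.map t.r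
  hom_inv_id := by
    rw [assoc, ← reassoc_of% (map_homEquiv adj hτ), ← L.map_comp_assoc, ← L.map_comp, ← ht]
    simp
  inv_hom_id := by rw [assoc, map_r_comp_map_i_comp adj hτ hβτ ht, hβτ]

lemma map_r_comp_leftIsoOfRetract_hom :
    L.map t.r ≫ (leftIsoOfRetract adj hτ hβτ ht).hom = τ := by
  rw [leftIsoOfRetract_hom, map_r_comp_map_i_comp adj hτ hβτ ht]

lemma unit_comp_map_leftIsoOfRetract_hom :
    adj.unit.app x ≫ R.map (leftIsoOfRetract adj hτ hβτ ht).hom =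
      t.i ≫ adj.homEquiv (R.obj b) b τ := by
  simp [homEquiv_unit]

lemma map_unit_comp_map_map_leftIsoOfRetract_hom :
    L.map (adj.unit.app x) ≫ L.map (R.map (leftIsoOfRetract adj hτ hβτ ht).hom) =
      (leftIsoOfRetract adj hτ hβτ ht).hom ≫ β := by
  rw [← L.map_comp, unit_comp_map_leftIsoOfRetract_hom, L.map_comp, map_homEquiv adj hτ,
    leftIsoOfRetract_hom, assoc]

lemma map_map_leftIsoOfRetract_hom_comp :
    L.map (R.map (leftIsoOfRetract adj hτ hβτ ht).hom) ≫ τ =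
      L.map (R.map (leftIsoOfRetract adj hτ hβτ ht).hom ≫ t.r) ≫
        (leftIsoOfRetract adj hτ hβτ ht).hom := by
  rw [L.map_comp, assoc, map_r_comp_leftIsoOfRetract_hom]

variable (hττ : L.map (R.map (adj.counit.app b)) ≫ τ = L.map (R.map τ) ≫ τ)

include ht hττ in
lemma map_comp_retract_r_eq : R.map τ ≫ t.r = R.map (adj.counit.app b) ≫ t.r := by
  have hr : t.r = adj.homEquiv (R.obj b) b τ ≫ t.r := by rw [← ht, assoc, t.retract, comp_id]
  rw [hr, ← assoc, ← assoc, map_comp_homEquiv_eq adj hττ]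

def algebraOfRetract : adj.toMonad.Algebra where
  A := x
  a := R.map (leftIsoOfRetract adj hτ hβτ ht).hom ≫ t.r
  unit := by
    show adj.unit.app x ≫ R.map (leftIsoOfRetract adj hτ hβτ ht).hom ≫ t.r = 𝟙 x
    rw [reassoc_of% (unit_comp_map_leftIsoOfRetract_hom adj hτ hβτ ht), ← ht]
    simp
  assoc := by
    show R.map (adj.counit.app (L.obj x)) ≫ R.map (leftIsoOfRetract adj hτ hβτ ht).hom ≫ t.r =
      R.map (L.map (R.map (leftIsoOfRetract adj hτ hβτ ht).hom ≫ t.r)) ≫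
        R.map (leftIsoOfRetract adj hτ hβτ ht).hom ≫ t.r
    have hu : R.map (L.map t.r) ≫ R.map (leftIsoOfRetract adj hτ hβτ ht).hom = R.map τ := by
      rw [← R.map_comp, map_r_comp_leftIsoOfRetract_hom]
    have hnat : adj.counit.app (L.obj x) ≫ (leftIsoOfRetract adj hτ hβτ ht).hom =
        L.map (R.map (leftIsoOfRetract adj hτ hβτ ht).hom) ≫ adj.counit.app b :=
      (adj.counit_naturality _).symm
    rw [← R.map_comp_assoc, hnat, R.map_comp, L.map_comp, R.map_comp, assoc, assoc,
      reassoc_of% hu, map_comp_retract_r_eq adj ht hττ]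

end SplittingAlgebra

instance [IsIdempotentComplete A] : (liftedComonadComparison adj).EssSurj where
  mem_essImage X := by
    have hτ : L.map (adj.unit.app (R.obj X.A.A)) ≫ L.map (R.map X.a.f) = X.a.f ≫ X.A.a :=
      X.a.h
    have hβτ := (toMonad_unit_comp_eq_id_iff adj X.a).mp X.unit
    have hττ := (toMonad_μ_comp_eq_iff adj X.a).mp X.assoc
    obtain ⟨x, i, r, hir, ht⟩ :=
      IsIdempotentComplete.idempotents_split _ _ (homEquiv_idem adj hτ hβτ)
    let t : Retract x (R.obj X.A.A) := ⟨i, r, hir⟩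
    replace ht : t.r ≫ t.i = _ := ht
    refine ⟨algebraOfRetract adj hτ hβτ ht hττ, ⟨
      Monad.Algebra.isoMk
        (Comonad.Coalgebra.isoMk (leftIsoOfRetract adj hτ hβτ ht)
          (map_unit_comp_map_map_leftIsoOfRetract_hom adj hτ hβτ ht)) ?_⟩⟩
    ext
    exact map_map_leftIsoOfRetract_hom_comp adj hτ hβτ ht

instance [IsIdempotentComplete A] : (liftedComonadComparison adj).IsEquivalence where
  faithful := (liftedComonadComparisonFullyFaithful adj).faithful
  full := (liftedComonadComparisonFullyFaithful adj).full

end CategoryTheory.Adjunction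

/-- if `A` and `B` are idempotent complete, then the Eilenberg–Moore category of
coalgebras for the comonad `K_T = forget_T ⋙ free_T` on `Alg(T)` is equivalent to `Coalg(W)`,
and the Eilenberg–Moore category of algebras for the monad `M_W = forget_W ⋙ cofree_W` on
`Coalg(W)` is equivalent to `Alg(T)`. -/
theorem nucleus_em_coalgebras_of_algebras
    {A : Type*} {B : Type*} [Category A] [Category B]
    (L : A ⥤ B) (R : B ⥤ A) (adj : L ⊣ R)
    [IsIdempotentComplete A] [IsIdempotentComplete B] :
    Nonempty ((adj.toMonad.adj.toComonad).Coalgebra ≌ adj.toComonad.Coalgebra) ∧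
    Nonempty ((adj.toComonad.adj.toMonad).Algebra ≌ adj.toMonad.Algebra) :=
  ⟨⟨(adj.liftedMonadComparison.asEquivalence).symm⟩,
    ⟨(adj.liftedComonadComparison.asEquivalence).symm⟩⟩
end

section
/- Let T be a monad on a category A. The Kleisli adjunction of T induces a comonad W_Kl on the Kleisli category Kl(T), and the Eilenberg–Moore adjunction of T induces the comonad W_EM = forget_T ⋙ free_T on Alg(T). If A, Kl(T) and Alg(T) are idempotent complete, then the Eilenberg–Moore category of W_Kl-coalgebras is equivalent to the Eilenberg–Moore category of W_EM-coalgebras. (In other words, the initial and the final resolution of a monad induce equivalent categories of coalgebras.) -/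
open CategoryTheory

/-!
The comparison functor `L : Kl(T) ⥤ Alg(T)`, sending `X` to the free algebra on `X`, is fully
faithful and intertwines `W_Kl` with `W_EM`, so it lifts to a fully faithful functor between the
categories of coalgebras. A `W_EM`-coalgebra `P` is a retract of the free algebra `W_EM P` (via its
structure map and the counit). As `Kl(T)` is idempotent complete, the essential image of the fully
faithful `L` is closed under retracts, so the carrier of `P` is `L X` for some `X`, and by full
faithfulness the coalgebra structure descends to `X`.
-/

namespace CategoryTheory

variable {C D : Type*} [Category C] [Category D]

/-- A morphism of comonads `(C, G) ⟶ (D, H)` in Street's sense whose 2-cell is invertible. -/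
structure Comonad.StrongMorphism (G : Comonad C) (H : Comonad D) where
  toFunctor : C ⥤ D
  iso : G.toFunctor ⋙ toFunctor ≅ toFunctor ⋙ H.toFunctor
  iso_hom_ε (X : C) : iso.hom.app X ≫ H.ε.app (toFunctor.obj X) = toFunctor.map (G.ε.app X)
  iso_hom_δ (X : C) : iso.hom.app X ≫ H.δ.app (toFunctor.obj X) =
    toFunctor.map (G.δ.app X) ≫ iso.hom.app (G.obj X) ≫ H.map (iso.hom.app X)

namespace Comonad.StrongMorphism

variable {G : Comonad C} {H : Comonad D} (Φ : StrongMorphism G H)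

lemma iso_hom_naturality {X Y : C} (f : X ⟶ Y) :
    Φ.toFunctor.map (G.map f) ≫ Φ.iso.hom.app Y = Φ.iso.hom.app X ≫ H.map (Φ.toFunctor.map f) :=
  Φ.iso.hom.naturality f

lemma iso_inv_naturality {X Y : C} (f : X ⟶ Y) :
    Φ.iso.inv.app X ≫ Φ.toFunctor.map (G.map f) = H.map (Φ.toFunctor.map f) ≫ Φ.iso.inv.app Y :=
  (Φ.iso.inv.naturality f).symm

lemma iso_inv_ε (X : C) :
    Φ.iso.inv.app X ≫ Φ.toFunctor.map (G.ε.app X) = H.ε.app (Φ.toFunctor.obj X) := by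
  rw [← Φ.iso_hom_ε, Iso.inv_hom_id_app_assoc]

lemma iso_inv_δ (X : C) : Φ.iso.inv.app X ≫ Φ.toFunctor.map (G.δ.app X) =
    H.δ.app (Φ.toFunctor.obj X) ≫ H.map (Φ.iso.inv.app X) ≫ Φ.iso.inv.app (G.obj X) := by
  rw [← cancel_epi (Φ.iso.hom.app X), Iso.hom_inv_id_app_assoc, reassoc_of% Φ.iso_hom_δ,
    ← H.map_comp_assoc, Iso.hom_inv_id_app]
  simp

-- An `abbrev`, so that the carrier of `Φ.mapCoalgebra.obj V` is reducibly `Φ.toFunctor.obj V.A`.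
abbrev mapCoalgebra : G.Coalgebra ⥤ H.Coalgebra where
  obj V :=
    { A := Φ.toFunctor.obj V.A
      a := Φ.toFunctor.map V.a ≫ Φ.iso.hom.app V.A
      counit := by
        rw [Category.assoc, Φ.iso_hom_ε, ← Functor.map_comp, V.counit, Functor.map_id]
      coassoc := by
        rw [Category.assoc, Φ.iso_hom_δ, ← Functor.map_comp_assoc, V.coassoc, Functor.map_comp,
          Category.assoc, reassoc_of% Φ.iso_hom_naturality, Functor.map_comp]
        simp only [Category.assoc] }
  map f :=
    { f := Φ.toFunctor.map f.f
      h := by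
        dsimp only
        rw [Category.assoc, ← Φ.iso_hom_naturality, ← Functor.map_comp_assoc, f.h,
          Functor.map_comp, Category.assoc] }

def fullyFaithfulMapCoalgebra (hΦ : Φ.toFunctor.FullyFaithful) :
    Φ.mapCoalgebra.FullyFaithful where
  preimage {V W} m :=
    { f := hΦ.preimage m.f
      h := hΦ.map_injective <| by
        rw [← cancel_mono (Φ.iso.hom.app W.A)]
        simpa [iso_hom_naturality] using m.h }

def preimageCoalgebra (hΦ : Φ.toFunctor.FullyFaithful) (P : H.Coalgebra) {X : C}
    (e : Φ.toFunctor.obj X ≅ P.A) : G.Coalgebra where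
  A := X
  a := hΦ.preimage (e.hom ≫ P.a ≫ H.map e.inv ≫ Φ.iso.inv.app X)
  counit := hΦ.map_injective <| by
    simp [Φ.iso_inv_ε, P.counit_assoc]
  coassoc := hΦ.map_injective <| by
    simp [Φ.iso_inv_δ, Φ.iso_inv_naturality, P.coassoc_assoc]

lemma essImage_mapCoalgebra (hΦ : Φ.toFunctor.FullyFaithful) {P : H.Coalgebra}
    (hP : Φ.toFunctor.essImage P.A) : Φ.mapCoalgebra.essImage P := by
  obtain ⟨X, ⟨e⟩⟩ := hP
  exact ⟨Φ.preimageCoalgebra hΦ P e, ⟨Coalgebra.isoMk e (by simp [preimageCoalgebra])⟩⟩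

end Comonad.StrongMorphism

def Comonad.Coalgebra.retract {G : Comonad C} (P : G.Coalgebra) : Retract P.A (G.obj P.A) where
  i := P.a
  r := G.ε.app P.A
  retract := P.counit

lemma Functor.FullyFaithful.essImage_of_retract [IsIdempotentComplete C] {L : C ⥤ D}
    (hL : L.FullyFaithful) {Y : D} {X : C} (h : Retract Y (L.obj X)) : L.essImage Y := by
  obtain ⟨Z, i, r, hir, hri⟩ := IsIdempotentComplete.idempotents_split X
    (hL.preimage (h.r ≫ h.i)) (hL.map_injective (by simp))
  have hp : L.map r ≫ L.map i = h.r ≫ h.i := by rw [← L.map_comp, hri, hL.map_preimage]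
  refine ⟨Z, ⟨{ hom := L.map i ≫ h.r, inv := h.i ≫ L.map r, hom_inv_id := ?_, inv_hom_id := ?_ }⟩⟩
  · calc (L.map i ≫ h.r) ≫ h.i ≫ L.map r = L.map (i ≫ r) ≫ L.map (i ≫ r) := by
          simp only [Category.assoc, ← reassoc_of% hp, Functor.map_comp]
      _ = 𝟙 _ := by simp [hir]
  · calc (h.i ≫ L.map r) ≫ L.map i ≫ h.r = (h.i ≫ h.r) ≫ h.i ≫ h.r := by simp [reassoc_of% hp]
      _ = 𝟙 Y := by simp

namespace Kleisli

variable (T : Monad C)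

-- An `abbrev` for the same reason: the carrier of `(toAlgebra T).obj X` is reducibly `T.obj X.of`.
abbrev toAlgebra : Kleisli T ⥤ T.Algebra where
  obj X := { A := T.obj X.of, a := T.μ.app X.of, assoc := (T.assoc _).symm }
  map {_ Y} f :=
    { f := T.map f.of ≫ T.μ.app Y.of
      h := by
        show T.map (T.map f.of ≫ T.μ.app _) ≫ T.μ.app _ = T.μ.app _ ≫ T.map f.of ≫ T.μ.app _
        rw [Functor.map_comp, Category.assoc, T.assoc, T.mu_naturality_assoc] }
  map_id X := by
    ext
    exact T.right_unit X.of
  map_comp f g := by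
    ext
    exact (Adjunction.fromKleisli T).map_comp f g

variable {T}

def fullyFaithfulToAlgebra : (toAlgebra T).FullyFaithful where
  preimage m := ⟨T.η.app _ ≫ m.f⟩
  map_preimage m := by
    ext
    have hm : T.map m.f ≫ T.μ.app _ = T.μ.app _ ≫ m.f := m.h
    show T.map (T.η.app _ ≫ m.f) ≫ T.μ.app _ = m.f
    rw [Functor.map_comp, Category.assoc, hm, ← Category.assoc, T.right_unit, Category.id_comp]
  preimage_map f := by
    ext
    show T.η.app _ ≫ T.map f.of ≫ T.μ.app _ = f.of
    rw [← Category.assoc, ← T.unit_naturality, Category.assoc, T.left_unit]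
    exact Category.comp_id _

lemma toAlgebra_map_comonad_map {X Y : Kleisli T} (f : X ⟶ Y) :
    (toAlgebra T).map ((Adjunction.adj T).toComonad.map f) =
      T.adj.toComonad.map ((toAlgebra T).map f) := by
  ext
  show T.map ((T.map f.of ≫ T.μ.app _) ≫ T.η.app _) ≫ T.μ.app _ = T.map (T.map f.of ≫ T.μ.app _)
  rw [Functor.map_comp _ _ (T.η.app _), Category.assoc, T.right_unit, Category.comp_id]

lemma toAlgebra_map_comonad_ε (X : Kleisli T) :
    (toAlgebra T).map ((Adjunction.adj T).toComonad.ε.app X) =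
      T.adj.toComonad.ε.app ((toAlgebra T).obj X) :=
  rfl

lemma toAlgebra_map_comonad_δ (X : Kleisli T) :
    (toAlgebra T).map ((Adjunction.adj T).toComonad.δ.app X) =
      T.adj.toComonad.δ.app ((toAlgebra T).obj X) := by
  ext
  show T.map (T.η.app _ ≫ T.η.app _) ≫ T.μ.app _ = T.map (T.η.app _ ≫ 𝟙 _)
  rw [Functor.map_comp, Category.assoc, T.right_unit, Category.comp_id]
  exact Category.comp_id _

variable (T) in
def strongMorphismToAlgebra :
    Comonad.StrongMorphism (Adjunction.adj T).toComonad T.adj.toComonad where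
  toFunctor := toAlgebra T
  iso := NatIso.ofComponents (fun _ => Iso.refl _) fun f =>
    (Category.comp_id _).trans ((toAlgebra_map_comonad_map f).trans (Category.id_comp _).symm)
  iso_hom_ε X := (Category.id_comp _).trans (toAlgebra_map_comonad_ε X).symm
  iso_hom_δ X := by
    change 𝟙 _ ≫ _ = _ ≫ 𝟙 _ ≫ T.adj.toComonad.map (𝟙 _)
    rw [Functor.map_id, Category.comp_id]
    exact (Category.id_comp _).trans
      ((toAlgebra_map_comonad_δ X).symm.trans (Category.comp_id _).symm)

end Kleisli

end CategoryTheory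

theorem kleisli_em_resolutions_equivalent_coalgebras_general
    {A : Type*} [Category A] (T : Monad A)
    [IsIdempotentComplete (Kleisli T)] :
    Nonempty (((Kleisli.Adjunction.adj T).toComonad).Coalgebra ≌
      ((T.adj).toComonad).Coalgebra) := by
  let Φ := Kleisli.strongMorphismToAlgebra T
  have hΦ : Φ.toFunctor.FullyFaithful := Kleisli.fullyFaithfulToAlgebra
  have : Φ.mapCoalgebra.IsEquivalence :=
    { full := (Φ.fullyFaithfulMapCoalgebra hΦ).full
      faithful := (Φ.fullyFaithfulMapCoalgebra hΦ).faithful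
      essSurj := ⟨fun P => Φ.essImage_mapCoalgebra hΦ
        (hΦ.essImage_of_retract (X := Kleisli.mk T P.A.A) P.retract)⟩ }
  exact ⟨Φ.mapCoalgebra.asEquivalence⟩

/-- STATEMENT 8: for a monad `T` on `A`, the Kleisli adjunction induces a comonad `W_Kl` on
`Kl(T)` and the Eilenberg–Moore adjunction induces the comonad `W_EM = forget_T ⋙ free_T` on
`Alg(T)`.  If `A`, `Kl(T)` and `Alg(T)` are idempotent complete, the Eilenberg–Moore categories
of `W_Kl`-coalgebras and of `W_EM`-coalgebras are equivalent. -/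
theorem kleisli_em_resolutions_equivalent_coalgebras
    {A : Type*} [Category A] (T : Monad A)
    [IsIdempotentComplete A]
    [IsIdempotentComplete (Kleisli T)]
    [IsIdempotentComplete T.Algebra] :
    Nonempty (((Kleisli.Adjunction.adj T).toComonad).Coalgebra ≌
      ((T.adj).toComonad).Coalgebra) :=
  kleisli_em_resolutions_equivalent_coalgebras_general T
end

section
/- Let x be an object of A and α : L x ⟶ L x an idempotent (α ≫ α = α); set α̃ := η_x ≫ R α : x ⟶ R(L x), and suppose R α = p ≫ α̃ for some p : R(L x) ⟶ x, with α̃ a monomorphism and p an epimorphism. Then: (i) α̃ ≫ p = 𝟙_x and η_x ≫ p = 𝟙_x; (ii) (x, p) is a T-algebra, i.e. μ_x ≫ p = R(L p) ≫ p; (iii) α̃ is a T-algebra homomorphism from (x, p) to the free T-algebra (R(L x), μ_x), i.e. p ≫ α̃ = R(L α̃) ≫ μ_x. Consequently the algebra (x, p) is a retract, in Alg(T), of the free algebra (R(L x), μ_x), split by the algebra homomorphisms α̃ and p. -/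
/-!
Write `α̃ = η_x ≫ R α` for the transpose of `α`, so that `α = L α̃ ≫ ε`. The factorisation
`R α = p ≫ α̃` says that the transpose of `p ≫ α̃` is that of `R α`, i.e. `L p ≫ α = ε ≫ α`.
Every identity of (i) and (ii) becomes, after composing with the monomorphism `α̃`, an identity
between maps `- ≫ R α`, which follows from idempotency of `α` or from `L p ≫ α = ε ≫ α`;
(iii) is `R α = R (L α̃ ≫ ε)`.
-/

open CategoryTheory

namespace CategoryTheory

lemma comp_eq_id_of_comp_comp_eq_of_mono {C : Type*} [Category C] {X Y : C} {t : X ⟶ Y}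
    {p : Y ⟶ X} (s : X ⟶ Y) [Mono s] (h : t ≫ p ≫ s = s) : t ≫ p = 𝟙 X :=
  (cancel_mono s).1 (by rw [Category.assoc, h, Category.id_comp])

namespace Adjunction

variable {A B : Type*} [Category A] [Category B] {L : A ⥤ B} {R : B ⥤ A} (adj : L ⊣ R)

lemma map_unit_comp_map_comp_counit {x : A} {y : B} (f : L.obj x ⟶ y) :
    L.map (adj.unit.app x ≫ R.map f) ≫ adj.counit.app y = f := by
  simp

lemma map_comp_eq_counit_comp_of_factor {x : A} {y : B} {f : L.obj x ⟶ y}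
    {p : R.obj (L.obj x) ⟶ x} (h : p ≫ adj.unit.app x ≫ R.map f = R.map f) :
    L.map p ≫ f = adj.counit.app (L.obj x) ≫ f :=
  calc L.map p ≫ f = L.map p ≫ L.map (adj.unit.app x ≫ R.map f) ≫ adj.counit.app y := by
        rw [map_unit_comp_map_comp_counit]
    _ = L.map (R.map f) ≫ adj.counit.app y := by rw [← L.map_comp_assoc, h]
    _ = adj.counit.app (L.obj x) ≫ f := adj.counit_naturality f

end Adjunction

end CategoryTheory

theorem idempotent_gives_projective_algebra_general
    {A : Type*} {B : Type*} [Category A] [Category B]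
    (L : A ⥤ B) (R : B ⥤ A) (adj : L ⊣ R)
    (x : A) (α : L.obj x ⟶ L.obj x) (p : R.obj (L.obj x) ⟶ x)
    (hα : α ≫ α = α)
    (hmono : Mono (adj.unit.app x ≫ R.map α))
    (hfac : R.map α = p ≫ (adj.unit.app x ≫ R.map α)) :
    -- (i)
    ((adj.unit.app x ≫ R.map α) ≫ p = 𝟙 x) ∧
    (adj.unit.app x ≫ p = 𝟙 x) ∧
    -- (ii) `(x, p)` is a `T`-algebra
    (R.map (adj.counit.app (L.obj x)) ≫ p = R.map (L.map p) ≫ p) ∧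
    -- (iii) `α̃` is an algebra homomorphism `(x, p) ⟶ (R(L x), μ_x)`
    (p ≫ (adj.unit.app x ≫ R.map α) =
      R.map (L.map (adj.unit.app x ≫ R.map α)) ≫ R.map (adj.counit.app (L.obj x))) := by
  have hcounit := adj.map_comp_eq_counit_comp_of_factor hfac.symm
  refine ⟨?_, ?_, ?_, ?_⟩
  · refine comp_eq_id_of_comp_comp_eq_of_mono (adj.unit.app x ≫ R.map α) ?_
    rw [← hfac, Category.assoc, ← R.map_comp, hα]
  · exact comp_eq_id_of_comp_comp_eq_of_mono _ (by rw [← hfac])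
  · refine (cancel_mono (adj.unit.app x ≫ R.map α)).1 ?_
    simp only [Category.assoc, ← hfac, ← R.map_comp, hcounit]
  · rw [← hfac, ← R.map_comp, adj.map_unit_comp_map_comp_counit]

/-- STATEMENT 13: let `x : A`, let `α : L x ⟶ L x` be idempotent, set `α̃ := η_x ≫ R α`, and
suppose `R α = p ≫ α̃` with `α̃` a monomorphism and `p` an epimorphism.  Then (i) `α̃ ≫ p = 𝟙 x`
and `η_x ≫ p = 𝟙 x`; (ii) `(x, p)` is a `T`-algebra, i.e. `μ_x ≫ p = R(L p) ≫ p`;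
(iii) `α̃` is a `T`-algebra homomorphism from `(x, p)` to the free `T`-algebra `(R(L x), μ_x)`,
i.e. `p ≫ α̃ = R(L α̃) ≫ μ_x`.  Consequently `(x, p)` is a retract of the free algebra in
`Alg(T)`, split by the algebra homomorphisms `α̃` and `p`. -/
theorem idempotent_gives_projective_algebra
    {A : Type*} {B : Type*} [Category A] [Category B]
    (L : A ⥤ B) (R : B ⥤ A) (adj : L ⊣ R)
    (x : A) (α : L.obj x ⟶ L.obj x) (p : R.obj (L.obj x) ⟶ x)
    (hα : α ≫ α = α)
    (hmono : Mono (adj.unit.app x ≫ R.map α)) (hepi : Epi p)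
    (hfac : R.map α = p ≫ (adj.unit.app x ≫ R.map α)) :
    -- (i)
    ((adj.unit.app x ≫ R.map α) ≫ p = 𝟙 x) ∧
    (adj.unit.app x ≫ p = 𝟙 x) ∧
    -- (ii) `(x, p)` is a `T`-algebra
    (R.map (adj.counit.app (L.obj x)) ≫ p = R.map (L.map p) ≫ p) ∧
    -- (iii) `α̃` is an algebra homomorphism `(x, p) ⟶ (R(L x), μ_x)`
    (p ≫ (adj.unit.app x ≫ R.map α) =
      R.map (L.map (adj.unit.app x ≫ R.map α)) ≫ R.map (adj.counit.app (L.obj x))) :=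
  idempotent_gives_projective_algebra_general L R adj x α p hα hmono hfac
end
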